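/- arXiv:2109.02750 — 2 statements merged into one kernel-verified Lean document; each statement's English description precedes it below -/
import Mathlib

section
/- Let (M,d) be a compact metric space, α ∈ (0,1], and let T : M → M be a homeomorphism whose inverse T⁻¹ is Lipschitz with constant Λ > 1. Let E be a complex Banach space and A : M → B(E) be α-Hölder with constant H for the operator norm, and suppose there are constants C₀ > 0 and θ > 0 such that sup_{x∈M} ‖A_n(x)‖ ≤ C₀·θⁿ for every n ≥ 0, where A_n(x) := A(x)∘A(T⁻¹x)∘⋯∘A(T^{-(n-1)}x). Then there exists C > 0 such that for every n ≥ 1 and all x, y ∈ M: ‖A_n(x) − A_n(y)‖ ≤ C·(θΛ^α)ⁿ·d(x,y)^α. -/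
/-- The cocycle products `A_n(x) = A(x) ∘ A(T⁻¹x) ∘ ⋯ ∘ A(T^{-(n-1)}x)` of a map
`A : M → B(E)` over the inverse of a homeomorphism `T`. -/
noncomputable def transferCocycle {M : Type*} [TopologicalSpace M] {E : Type*}
    [NormedAddCommGroup E] [NormedSpace ℂ E] (T : M ≃ₜ M) (A : M → E →L[ℂ] E)
    (n : ℕ) (x : M) : E →L[ℂ] E :=
  ((List.range n).map fun k => A ((T.symm)^[k] x)).prod

/-
Telescoping the cocycle products gives
`A_n(x) - A_n(y) = ∑_{k<n} A_k(x) (A(T^{-k}x) - A(T^{-k}y)) A_{n-1-k}(T^{-(k+1)}y)`.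
The two outer factors together cost `C₀² θ^{n-1}` and the middle one `H Λ^{αk} d(x,y)^α`,
so the sum is a geometric series of ratio `Λ^α > 1`, dominated by a multiple of its last term.
-/

theorem List.prod_map_range_sub_prod_map_range {R : Type*} [Ring R] (f g : ℕ → R) (n : ℕ) :
    ((List.range n).map f).prod - ((List.range n).map g).prod =
      ∑ k ∈ Finset.range n, ((List.range k).map f).prod * (f k - g k) *
        ((List.range (n - 1 - k)).map fun i => g (i + (k + 1))).prod := by
  induction n generalizing f g with
  | zero => simp
  | succ n ih =>
    rw [List.prod_range_succ', List.prod_range_succ', Finset.sum_range_succ',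
      ← sub_add_sub_cancel _ (f 0 * ((List.range n).map fun i => g i.succ).prod), ← mul_sub,
      ← sub_mul, ih, Finset.mul_sum]
    congr 1
    · refine Finset.sum_congr rfl fun k _ => ?_
      rw [List.prod_range_succ' f k, ← mul_assoc, ← mul_assoc,
        show n + 1 - 1 - (k + 1) = n - 1 - k by omega]
      rfl
    · simp

section

variable {M : Type*} [TopologicalSpace M] {E : Type*} [NormedAddCommGroup E] [NormedSpace ℂ E]
  (T : M ≃ₜ M) (A : M → E →L[ℂ] E)

theorem transferCocycle_sub_eq_sum (n : ℕ) (x y : M) :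
    transferCocycle T A n x - transferCocycle T A n y =
      ∑ k ∈ Finset.range n, transferCocycle T A k x *
        (A (T.symm^[k] x) - A (T.symm^[k] y)) *
        transferCocycle T A (n - 1 - k) (T.symm^[k + 1] y) := by
  simp only [transferCocycle, List.prod_map_range_sub_prod_map_range, Function.iterate_add_apply]

theorem norm_transferCocycle_sub_le {C₀ θ D r : ℝ}
    (hbound : ∀ n x, ‖transferCocycle T A n x‖ ≤ C₀ * θ ^ n) {x y : M}
    (hA : ∀ k, ‖A (T.symm^[k] x) - A (T.symm^[k] y)‖ ≤ D * r ^ k) (n : ℕ) :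
    ‖transferCocycle T A n x - transferCocycle T A n y‖ ≤
      C₀ ^ 2 * D * θ ^ (n - 1) * ∑ k ∈ Finset.range n, r ^ k := by
  rw [transferCocycle_sub_eq_sum, Finset.mul_sum]
  refine (norm_sum_le _ _).trans (Finset.sum_le_sum fun k hk => ?_)
  have hpow : θ ^ k * θ ^ (n - 1 - k) = θ ^ (n - 1) := by
    rw [← pow_add]; congr 1; have := Finset.mem_range.1 hk; omega
  calc _ ≤ ‖transferCocycle T A k x‖ * ‖A (T.symm^[k] x) - A (T.symm^[k] y)‖ *
          ‖transferCocycle T A (n - 1 - k) (T.symm^[k + 1] y)‖ := norm_mul₃_le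
    _ ≤ C₀ * θ ^ k * (D * r ^ k) * (C₀ * θ ^ (n - 1 - k)) := by
        have hP0 := (norm_nonneg _).trans (hbound k x)
        have hD0 := (norm_nonneg _).trans (hA k)
        gcongr
        exacts [hbound _ _, hA k, hbound _ _]
    _ = C₀ ^ 2 * D * θ ^ (n - 1) * r ^ k := by rw [← hpow]; ring

end

theorem norm_sub_comp_iterate_le {M N : Type*} [PseudoMetricSpace M] [SeminormedAddCommGroup N]
    {f : M → M} {g : M → N} {Λ H α : ℝ} (hΛ : 0 ≤ Λ) (hH : 0 ≤ H) (hα : 0 ≤ α)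
    (hf : ∀ x y, dist (f x) (f y) ≤ Λ * dist x y) (hg : ∀ x y, ‖g x - g y‖ ≤ H * dist x y ^ α)
    (k : ℕ) (x y : M) :
    ‖g (f^[k] x) - g (f^[k] y)‖ ≤ H * dist x y ^ α * (Λ ^ α) ^ k := by
  have hfk : dist (f^[k] x) (f^[k] y) ≤ Λ ^ k * dist x y := by
    have hf' : LipschitzWith Λ.toNNReal f :=
      .of_dist_le_mul fun x y => by rw [Real.coe_toNNReal _ hΛ]; exact hf x y
    simpa [Real.coe_toNNReal _ hΛ] using (hf'.iterate k).dist_le_mul x y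
  calc _ ≤ H * dist (f^[k] x) (f^[k] y) ^ α := hg _ _
    _ ≤ H * (Λ ^ k * dist x y) ^ α := by gcongr
    _ = H * dist x y ^ α * (Λ ^ α) ^ k := by
        rw [Real.mul_rpow (by positivity) dist_nonneg, Real.rpow_pow_comm hΛ]; ring

theorem geom_sum_le_pow_div_sub_one {r : ℝ} (hr : 1 < r) (n : ℕ) :
    ∑ k ∈ Finset.range n, r ^ k ≤ r ^ n / (r - 1) := by
  rw [geom_sum_eq hr.ne', div_le_div_iff_of_pos_right (by linarith)]
  linarith

theorem holder_estimate_cocycle_general {M : Type*} [MetricSpace M]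
    {E : Type*} [NormedAddCommGroup E] [NormedSpace ℂ E]
    (α : ℝ) (hα : 0 < α)
    (T : M ≃ₜ M) (Λ : ℝ) (hΛ : 1 < Λ)
    (hLip : ∀ x y : M, dist (T.symm x) (T.symm y) ≤ Λ * dist x y)
    (A : M → E →L[ℂ] E) (H : ℝ)
    (hHold : ∀ x y : M, ‖A x - A y‖ ≤ H * dist x y ^ α)
    (C₀ θ : ℝ) (hθ : 0 < θ)
    (hbound : ∀ (n : ℕ) (x : M), ‖transferCocycle T A n x‖ ≤ C₀ * θ ^ n) :
    ∃ C > 0, ∀ n : ℕ, 1 ≤ n → ∀ x y : M,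
      ‖transferCocycle T A n x - transferCocycle T A n y‖ ≤
        C * (θ * Λ ^ α) ^ n * dist x y ^ α := by
  set r := Λ ^ α
  have hr : 1 < r := Real.one_lt_rpow hΛ hα
  have hHold' (x y : M) : ‖A x - A y‖ ≤ max H 0 * dist x y ^ α :=
    (hHold x y).trans (by gcongr; exact le_max_left H 0)
  set K := C₀ ^ 2 * max H 0 / (θ * (r - 1))
  have hK : 0 ≤ K := div_nonneg (by positivity) (mul_nonneg hθ.le (by linarith))
  refine ⟨K + 1, by linarith, fun n hn x y => ?_⟩
  have hA := norm_sub_comp_iterate_le (by linarith) (le_max_right H 0) hα.le hLip hHold'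
    (x := x) (y := y)
  calc _ ≤ C₀ ^ 2 * (max H 0 * dist x y ^ α) * θ ^ (n - 1) * (r ^ n / (r - 1)) := by
        refine (norm_transferCocycle_sub_le T A hbound hA n).trans ?_
        gcongr
        exact geom_sum_le_pow_div_sub_one hr n
    _ = K * (θ * r) ^ n * dist x y ^ α := by
        obtain ⟨m, rfl⟩ : ∃ m, n = m + 1 := ⟨n - 1, by omega⟩
        simp only [K, Nat.add_sub_cancel]
        field_simp
        ring
    _ ≤ (K + 1) * (θ * r) ^ n * dist x y ^ α := by gcongr; linarith

/-- Hölder estimate on the operator cocycle products: if `T⁻¹` is `Λ`-Lipschitz,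
`A : M → B(E)` is `α`-Hölder in operator norm and `sup_x ‖A_n(x)‖ ≤ C₀ θⁿ`, then
`‖A_n(x) − A_n(y)‖ ≤ C (θ Λ^α)ⁿ d(x,y)^α`. -/
theorem holder_estimate_cocycle {M : Type*} [MetricSpace M] [CompactSpace M]
    {E : Type*} [NormedAddCommGroup E] [NormedSpace ℂ E]
    (α : ℝ) (hα : 0 < α) (hα1 : α ≤ 1)
    (T : M ≃ₜ M) (Λ : ℝ) (hΛ : 1 < Λ)
    (hLip : ∀ x y : M, dist (T.symm x) (T.symm y) ≤ Λ * dist x y)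
    (A : M → E →L[ℂ] E) (H : ℝ)
    (hHold : ∀ x y : M, ‖A x - A y‖ ≤ H * dist x y ^ α)
    (C₀ θ : ℝ) (hC₀ : 0 < C₀) (hθ : 0 < θ)
    (hbound : ∀ (n : ℕ) (x : M), ‖transferCocycle T A n x‖ ≤ C₀ * θ ^ n) :
    ∃ C > 0, ∀ n : ℕ, 1 ≤ n → ∀ x y : M,
      ‖transferCocycle T A n x - transferCocycle T A n y‖ ≤
        C * (θ * Λ ^ α) ^ n * dist x y ^ α :=
  holder_estimate_cocycle_general α hα T Λ hΛ hLip A H hHold C₀ θ hθ hbound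
end

section
/- Let (M,d) be a compact metric space, α ∈ (0,1], and let T : M → M be a homeomorphism whose inverse T⁻¹ is Lipschitz with constant Λ > 1. Let h : M → ℂ be α-Hölder, and suppose there are constants C₀ > 0 and θ > 0 such that sup_{x∈M} ∏_{k=0}^{n-1} |h(T^{-k}x)| ≤ C₀·θⁿ for every n ≥ 0. Then there exists C > 0 such that for every n ≥ 1 and every bounded α-Hölder function v : M → ℂ with sup-norm ‖v‖_∞ and Hölder constant |v|_α, the function L_hⁿ v satisfies ‖L_hⁿ v‖_∞ ≤ C₀·θⁿ·‖v‖_∞ and is α-Hölder with constant at most C·(θΛ^α)ⁿ·(‖v‖_∞ + |v|_α). -/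
/-!
Write `P_n(x) = ∏_{k<n} h(T^{-k}x)`, so that `‖P_n‖ ≤ C₀θⁿ`. Telescoping `P_n(x) - P_n(y)`
replaces one factor at a time; the `j`-th term is at most
`C₀θ^j · H(Λ^α)^j d(x,y)^α · C₀θ^{n-1-j}`, and since `Λ^α > 1` the geometric sum is
`O((Λ^α)ⁿ)`, whence `‖P_n(x) - P_n(y)‖ = O((θΛ^α)ⁿ d(x,y)^α)`. The estimate for
`P_n · (v ∘ T^{-n})` follows from `ab - cd = (a - c)b + c(b - d)`.
-/
open Finset

theorem prod_range_sub_prod_range_eq_sum {R : Type*} [CommRing R] (a b : ℕ → R) (n : ℕ) :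
    ∏ k ∈ range n, a k - ∏ k ∈ range n, b k =
      ∑ j ∈ range n, (∏ k ∈ range j, a k) * (a j - b j) * ∏ k ∈ Ico (j + 1) n, b k := by
  set F : ℕ → R := fun j ↦ (∏ k ∈ range j, a k) * ∏ k ∈ Ico j n, b k
  have hF : F n - F 0 = ∏ k ∈ range n, a k - ∏ k ∈ range n, b k := by
    simp only [F, range_zero, prod_empty, one_mul, Ico_self, mul_one, ← range_eq_Ico]
  rw [← hF, ← sum_range_sub]
  refine sum_congr rfl fun j hj ↦ ?_
  simp only [F, prod_range_succ, prod_eq_prod_Ico_succ_bot (mem_range.mp hj)]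
  ring

theorem norm_mul_sub_mul_le {R : Type*} [SeminormedRing R] (a b c d : R) :
    ‖a * b - c * d‖ ≤ ‖a - c‖ * ‖b‖ + ‖c‖ * ‖b - d‖ := by
  calc ‖a * b - c * d‖ = ‖(a - c) * b + c * (b - d)‖ := by congr 1; noncomm_ring
    _ ≤ ‖a - c‖ * ‖b‖ + ‖c‖ * ‖b - d‖ :=
      (norm_add_le _ _).trans (add_le_add (norm_mul_le _ _) (norm_mul_le _ _))

theorem geom_sum_le_pow_div_sub_one_s9 {q : ℝ} (hq : 1 < q) (n : ℕ) :
    ∑ j ∈ range n, q ^ j ≤ q ^ n / (q - 1) := by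
  rw [geom_sum_eq hq.ne', div_le_div_iff_of_pos_right (by linarith)]
  linarith

section Orbit

variable {X R : Type*} [NormedCommRing R] [NormOneClass R] {f : X → X} {h : X → R} {C₀ θ : ℝ}

theorem norm_prod_Ico_iterate_le
    (hbound : ∀ n x, ∏ k ∈ range n, ‖h (f^[k] x)‖ ≤ C₀ * θ ^ n) (m n : ℕ) (x : X) :
    ‖∏ k ∈ Ico m n, h (f^[k] x)‖ ≤ C₀ * θ ^ (n - m) := by
  refine (Finset.norm_prod_le _ _).trans ?_
  simpa [prod_Ico_eq_prod_range, add_comm m, Function.iterate_add_apply] using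
    hbound (n - m) (f^[m] x)

section PseudoMetric

variable [PseudoMetricSpace X] {Λ α : ℝ}

theorem rpow_dist_iterate_le (hΛ : 0 ≤ Λ) (hα : 0 ≤ α)
    (hf : ∀ x y, dist (f x) (f y) ≤ Λ * dist x y) (n : ℕ) (x y : X) :
    dist (f^[n] x) (f^[n] y) ^ α ≤ (Λ ^ α) ^ n * dist x y ^ α := by
  have hLip : LipschitzWith Λ.toNNReal f :=
    .of_dist_le_mul fun x y ↦ by rw [Real.coe_toNNReal _ hΛ]; exact hf x y
  have hdist : dist (f^[n] x) (f^[n] y) ≤ Λ ^ n * dist x y := by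
    simpa [Real.coe_toNNReal _ hΛ] using (hLip.iterate n).dist_le_mul x y
  calc dist (f^[n] x) (f^[n] y) ^ α ≤ (Λ ^ n * dist x y) ^ α := by gcongr
    _ = (Λ ^ α) ^ n * dist x y ^ α := by
      rw [Real.mul_rpow (by positivity) dist_nonneg, ← Real.rpow_natCast_mul hΛ,
        mul_comm (n : ℝ), Real.rpow_mul_natCast hΛ]

theorem norm_sub_comp_iterate_le_s9 {E : Type*} [SeminormedAddGroup E] {u : X → E} {K : ℝ}
    (hK : 0 ≤ K) (hu : ∀ x y, ‖u x - u y‖ ≤ K * dist x y ^ α) (hΛ : 0 ≤ Λ) (hα : 0 ≤ α)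
    (hf : ∀ x y, dist (f x) (f y) ≤ Λ * dist x y) (n : ℕ) (x y : X) :
    ‖u (f^[n] x) - u (f^[n] y)‖ ≤ K * (Λ ^ α) ^ n * dist x y ^ α := by
  calc ‖u (f^[n] x) - u (f^[n] y)‖ ≤ K * dist (f^[n] x) (f^[n] y) ^ α := hu _ _
    _ ≤ K * ((Λ ^ α) ^ n * dist x y ^ α) := by
      gcongr; exact rpow_dist_iterate_le hΛ hα hf n x y
    _ = K * (Λ ^ α) ^ n * dist x y ^ α := by ring

theorem norm_prod_iterate_sub_prod_iterate_le {H : ℝ} (hH : 0 ≤ H)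
    (hh : ∀ x y, ‖h x - h y‖ ≤ H * dist x y ^ α) (hΛ : 0 ≤ Λ) (hα : 0 ≤ α)
    (hf : ∀ x y, dist (f x) (f y) ≤ Λ * dist x y)
    (hbound : ∀ n x, ∏ k ∈ range n, ‖h (f^[k] x)‖ ≤ C₀ * θ ^ n) (n : ℕ) (x y : X) :
    ‖∏ k ∈ range (n + 1), h (f^[k] x) - ∏ k ∈ range (n + 1), h (f^[k] y)‖ ≤
      C₀ ^ 2 * H * θ ^ n * (∑ j ∈ range (n + 1), (Λ ^ α) ^ j) * dist x y ^ α := by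
  have hterm : ∀ j ∈ range (n + 1),
      ‖(∏ k ∈ range j, h (f^[k] x)) * (h (f^[j] x) - h (f^[j] y)) *
          ∏ k ∈ Ico (j + 1) (n + 1), h (f^[k] y)‖ ≤
        C₀ ^ 2 * H * θ ^ n * (Λ ^ α) ^ j * dist x y ^ α := by
    intro j hj
    have hhead : ‖∏ k ∈ range j, h (f^[k] x)‖ ≤ C₀ * θ ^ j :=
      (Finset.norm_prod_le _ _).trans (hbound j x)
    have htail := norm_prod_Ico_iterate_le hbound (j + 1) (n + 1) y
    have hθ : θ ^ j * θ ^ (n + 1 - (j + 1)) = θ ^ n := by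
      rw [Nat.add_sub_add_right, pow_mul_pow_sub _ (by simpa [Nat.lt_succ_iff] using hj)]
    calc _ ≤ ‖∏ k ∈ range j, h (f^[k] x)‖ * ‖h (f^[j] x) - h (f^[j] y)‖ *
          ‖∏ k ∈ Ico (j + 1) (n + 1), h (f^[k] y)‖ := norm_mul₃_le
      _ ≤ C₀ * θ ^ j * (H * (Λ ^ α) ^ j * dist x y ^ α) * (C₀ * θ ^ (n + 1 - (j + 1))) := by
        have hmid := norm_sub_comp_iterate_le_s9 hH hh hΛ hα hf j x y
        have hC₀θ : 0 ≤ C₀ * θ ^ j := (norm_nonneg _).trans hhead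
        gcongr
      _ = C₀ ^ 2 * H * θ ^ n * (Λ ^ α) ^ j * dist x y ^ α := by rw [← hθ]; ring
  rw [prod_range_sub_prod_range_eq_sum, mul_sum, sum_mul]
  exact (norm_sum_le _ _).trans (sum_le_sum hterm)


end PseudoMetric

theorem norm_prod_iterate_mul_sub_le [MetricSpace X] {Λ α H Mv Kv : ℝ} {v : X → R} (hΛ : 1 < Λ) (hα : 0 < α)
    (hθ : 0 < θ) (hH : 0 ≤ H) (hh : ∀ x y, ‖h x - h y‖ ≤ H * dist x y ^ α)
    (hf : ∀ x y, dist (f x) (f y) ≤ Λ * dist x y)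
    (hbound : ∀ n x, ∏ k ∈ range n, ‖h (f^[k] x)‖ ≤ C₀ * θ ^ n)
    (hv : ∀ x, ‖v x‖ ≤ Mv) (hv' : ∀ x y, ‖v x - v y‖ ≤ Kv * dist x y ^ α) (n : ℕ) (x y : X) :
    ‖(∏ k ∈ range (n + 1), h (f^[k] x)) * v (f^[n + 1] x) -
        (∏ k ∈ range (n + 1), h (f^[k] y)) * v (f^[n + 1] y)‖ ≤
      (C₀ + C₀ ^ 2 * H / (θ * (Λ ^ α - 1))) * (θ * Λ ^ α) ^ (n + 1) * (Mv + Kv) *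
        dist x y ^ α := by
  rcases eq_or_ne x y with rfl | hxy
  · simp [Real.zero_rpow hα.ne']
  have hd : 0 < dist x y ^ α := Real.rpow_pos_of_pos (dist_pos.mpr hxy) α
  have hKv : 0 ≤ Kv := nonneg_of_mul_nonneg_left ((norm_nonneg _).trans (hv' x y)) hd
  have hMv : 0 ≤ Mv := (norm_nonneg _).trans (hv x)
  have hC₀ : 0 ≤ C₀ := by simpa using (hbound 0 x).trans' zero_le_one
  set q := Λ ^ α
  have hq : 1 < q := Real.one_lt_rpow hΛ hα
  set A := C₀ ^ 2 * H / (θ * (q - 1))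
  have hA : 0 ≤ A := div_nonneg (by positivity) (mul_nonneg hθ.le (by linarith))
  have hgeom : θ ^ n * ∑ j ∈ range (n + 1), q ^ j ≤ (θ * q) ^ (n + 1) / (θ * (q - 1)) := by
    calc θ ^ n * ∑ j ∈ range (n + 1), q ^ j ≤ θ ^ n * (q ^ (n + 1) / (q - 1)) := by
          gcongr; exact geom_sum_le_pow_div_sub_one_s9 hq _
      _ = (θ * q) ^ (n + 1) / (θ * (q - 1)) := by
          field_simp [hθ.ne', (by linarith : q - 1 ≠ 0)]; ring
  have hprod : ‖∏ k ∈ range (n + 1), h (f^[k] x) - ∏ k ∈ range (n + 1), h (f^[k] y)‖ ≤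
      A * (θ * q) ^ (n + 1) * dist x y ^ α := by
    refine (norm_prod_iterate_sub_prod_iterate_le hH hh (by linarith) hα.le hf hbound n x y).trans ?_
    calc C₀ ^ 2 * H * θ ^ n * (∑ j ∈ range (n + 1), q ^ j) * dist x y ^ α
        = C₀ ^ 2 * H * (θ ^ n * ∑ j ∈ range (n + 1), q ^ j) * dist x y ^ α := by ring
      _ ≤ C₀ ^ 2 * H * ((θ * q) ^ (n + 1) / (θ * (q - 1))) * dist x y ^ α := by gcongr
      _ = A * (θ * q) ^ (n + 1) * dist x y ^ α := by simp only [A]; ring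
  have hPy : ‖∏ k ∈ range (n + 1), h (f^[k] y)‖ ≤ C₀ * θ ^ (n + 1) :=
    (Finset.norm_prod_le _ _).trans (hbound _ y)
  have hvd := norm_sub_comp_iterate_le_s9 hKv hv' (by linarith) hα.le hf (n + 1) x y
  calc _ ≤ _ := norm_mul_sub_mul_le _ _ _ _
    _ ≤ A * (θ * q) ^ (n + 1) * dist x y ^ α * Mv + C₀ * θ ^ (n + 1) *
          (Kv * q ^ (n + 1) * dist x y ^ α) := by gcongr; exact hv _
    _ = (A * Mv + C₀ * Kv) * ((θ * q) ^ (n + 1) * dist x y ^ α) := by ring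
    _ ≤ ((C₀ + A) * (Mv + Kv)) * ((θ * q) ^ (n + 1) * dist x y ^ α) := by
      gcongr; nlinarith [mul_nonneg hA hKv, mul_nonneg hC₀ hMv]
    _ = _ := by ring

end Orbit

theorem transferOperator_holder_norm_estimates_general {M : Type*} [MetricSpace M]
    (α : ℝ) (hα : 0 < α)
    (T : M ≃ₜ M) (Λ : ℝ) (hΛ : 1 < Λ)
    (hLip : ∀ x y : M, dist (T.symm x) (T.symm y) ≤ Λ * dist x y)
    (h : M → ℂ) (H : ℝ)
    (hHold : ∀ x y : M, ‖h x - h y‖ ≤ H * dist x y ^ α)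
    (C₀ θ : ℝ) (hC₀ : 0 < C₀) (hθ : 0 < θ)
    (hbound : ∀ (n : ℕ) (x : M),
      ∏ k ∈ Finset.range n, ‖h ((T.symm)^[k] x)‖ ≤ C₀ * θ ^ n) :
    ∃ C > 0, ∀ n : ℕ, 1 ≤ n → ∀ (v : M → ℂ) (Mv Kv : ℝ),
      (∀ x : M, ‖v x‖ ≤ Mv) →
      (∀ x y : M, ‖v x - v y‖ ≤ Kv * dist x y ^ α) →
      (∀ x : M,
        ‖(∏ k ∈ Finset.range n, h ((T.symm)^[k] x)) * v ((T.symm)^[n] x)‖ ≤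
          C₀ * θ ^ n * Mv) ∧
      (∀ x y : M,
        ‖(∏ k ∈ Finset.range n, h ((T.symm)^[k] x)) * v ((T.symm)^[n] x) -
            (∏ k ∈ Finset.range n, h ((T.symm)^[k] y)) * v ((T.symm)^[n] y)‖ ≤
          C * (θ * Λ ^ α) ^ n * (Mv + Kv) * dist x y ^ α) := by
  have hq : 1 < Λ ^ α := Real.one_lt_rpow hΛ hα
  have hHold' (x y : M) : ‖h x - h y‖ ≤ max H 0 * dist x y ^ α :=
    (hHold x y).trans (by gcongr; exact le_max_left _ _)
  refine ⟨C₀ + C₀ ^ 2 * max H 0 / (θ * (Λ ^ α - 1)),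
    add_pos_of_pos_of_nonneg hC₀ (div_nonneg (by positivity) (mul_nonneg hθ.le (by linarith))),
    fun n hn v Mv Kv hv hv' ↦ ⟨fun x ↦ ?_, ?_⟩⟩
  · rw [norm_mul, norm_prod]
    exact mul_le_mul (hbound n x) (hv _) (norm_nonneg _) (by positivity)
  · obtain ⟨m, rfl⟩ := Nat.exists_eq_add_of_le' hn
    exact norm_prod_iterate_mul_sub_le hΛ hα hθ (le_max_right H 0) hHold' hLip hbound hv hv' m

/-- Norm estimates for the iterated transfer operator
`(L_hⁿ v)(x) = (∏_{k<n} h(T^{-k}x)) · v(T^{-n}x)` on `α`-Hölder functions: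
`‖L_hⁿ v‖_∞ ≤ C₀ θⁿ ‖v‖_∞` and `L_hⁿ v` is `α`-Hölder with constant at most
`C (θ Λ^α)ⁿ (‖v‖_∞ + |v|_α)`. -/
theorem transferOperator_holder_norm_estimates {M : Type*} [MetricSpace M]
    [CompactSpace M] (α : ℝ) (hα : 0 < α) (hα1 : α ≤ 1)
    (T : M ≃ₜ M) (Λ : ℝ) (hΛ : 1 < Λ)
    (hLip : ∀ x y : M, dist (T.symm x) (T.symm y) ≤ Λ * dist x y)
    (h : M → ℂ) (H : ℝ)
    (hHold : ∀ x y : M, ‖h x - h y‖ ≤ H * dist x y ^ α)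
    (C₀ θ : ℝ) (hC₀ : 0 < C₀) (hθ : 0 < θ)
    (hbound : ∀ (n : ℕ) (x : M),
      ∏ k ∈ Finset.range n, ‖h ((T.symm)^[k] x)‖ ≤ C₀ * θ ^ n) :
    ∃ C > 0, ∀ n : ℕ, 1 ≤ n → ∀ (v : M → ℂ) (Mv Kv : ℝ),
      (∀ x : M, ‖v x‖ ≤ Mv) →
      (∀ x y : M, ‖v x - v y‖ ≤ Kv * dist x y ^ α) →
      (∀ x : M,
        ‖(∏ k ∈ Finset.range n, h ((T.symm)^[k] x)) * v ((T.symm)^[n] x)‖ ≤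
          C₀ * θ ^ n * Mv) ∧
      (∀ x y : M,
        ‖(∏ k ∈ Finset.range n, h ((T.symm)^[k] x)) * v ((T.symm)^[n] x) -
            (∏ k ∈ Finset.range n, h ((T.symm)^[k] y)) * v ((T.symm)^[n] y)‖ ≤
          C * (θ * Λ ^ α) ^ n * (Mv + Kv) * dist x y ^ α) :=
  transferOperator_holder_norm_estimates_general α hα T Λ hΛ hLip h H hHold C₀ θ hC₀ hθ hbound
end
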